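/- arXiv:2212.01938 — 2 statements merged into one kernel-verified Lean document; each statement's English description precedes it below -/
import Mathlib

section
/- The entropic-regularized UOT objective F(β) = ⟨β, C⟩ + λ Σ_{ij} β_{ij}(log β_{ij} − 1) + λ_KL(KL̃(β𝟙 ‖ n) + KL̃(βᵀ𝟙 ‖ m)) with λ > 0, λ_KL ≥ 0 attains its infimum over β ∈ ℝ_{>0}^{n×m}, i.e., a minimizer exists (and by strict convexity is unique). -/
noncomputable def genKL {n : ℕ} (p q : Fin n → ℝ) : ℝ :=
  ∑ i, (p i * Real.log (p i / q i) - p i + q i)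

/-- The entropic-regularized UOT objective of Definition 3 (MEMA policy blending). -/
noncomputable def uotObj {n m : ℕ} (C : Matrix (Fin n) (Fin m) ℝ) (lam lamKL : ℝ)
    (nv : Fin n → ℝ) (mv : Fin m → ℝ) (β : Matrix (Fin n) (Fin m) ℝ) : ℝ :=
  (∑ i, ∑ j, β i j * C i j)
    + lam * ∑ i, ∑ j, β i j * (Real.log (β i j) - 1)
    + lamKL * (genKL (fun i => ∑ j, β i j) nv + genKL (fun j => ∑ i, β i j) mv)

/-!
On the closed orthant of nonnegative matrices the objective is continuous and coercive: the
entry `x = β i j` contributes `x * C i j + λ x (log x - 1)`, which is bounded below by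
`-λ exp (-C i j / λ)` and tends to `∞` with `x`, while the KL terms are nonnegative. So the
objective has a minimizer on the orthant. That minimizer has no zero entry: moving mass `t ≤ 1`
into a zero entry changes the objective by at most `t (K + λ log t)` for a constant `K`, since the
KL terms have slope at most `log ((s + 1) / q)` there, and this is negative for small `t`.
-/

open Real Filter InformationTheory

lemma mul_log_div_eq {q : ℝ} (hq : q ≠ 0) (p : ℝ) :
    p * log (p / q) = p * log p - p * log q := by
  rcases eq_or_ne p 0 with rfl | hp
  · simp
  · rw [log_div hp hq]; ring

lemma mul_klFun_div {q : ℝ} (hq : q ≠ 0) (p : ℝ) :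
    q * klFun (p / q) = p * log (p / q) - p + q := by
  rw [klFun_apply]; field_simp; ring

lemma klFun_sub_klFun_le {x y : ℝ} (hx : 0 ≤ x) (hy : 0 < y) :
    klFun y - klFun x ≤ (y - x) * log y := by
  suffices x * (log y - log x) ≤ y - x by rw [klFun_apply, klFun_apply]; linarith
  rcases hx.eq_or_lt with rfl | hx
  · simpa using hy.le
  · have h := mul_le_mul_of_nonneg_left (log_le_sub_one_of_pos (div_pos hy hx)) hx.le
    rw [log_div hy.ne' hx.ne', mul_sub, mul_sub, mul_div_cancel₀ _ hx.ne', mul_one] at h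
    linarith

-- `c ↦ λ exp (-c / λ)` is the Legendre conjugate of `x ↦ λ x (log x - 1)`, taken at `-c`.
lemma neg_mul_exp_le_entropic_cost (c : ℝ) {lam x : ℝ} (hlam : 0 < lam) (hx : 0 ≤ x) :
    -(lam * exp (-c / lam)) ≤ x * c + lam * (x * (log x - 1)) := by
  have h := mul_nonneg hlam.le (mul_nonneg (exp_pos (-c / lam)).le
    (klFun_nonneg (div_nonneg hx (exp_pos (-c / lam)).le)))
  rw [mul_klFun_div (exp_pos _).ne', mul_log_div_eq (exp_pos _).ne', log_exp] at h
  have e : lam * (x * log x - x * (-c / lam) - x + exp (-c / lam))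
      = x * c + lam * (x * (log x - 1)) + lam * exp (-c / lam) := by
    field_simp; ring
  linarith

lemma tendsto_entropic_cost_atTop (c : ℝ) {lam : ℝ} (hlam : 0 < lam) :
    Tendsto (fun x => x * c + lam * (x * (log x - 1))) atTop atTop := by
  have h : Tendsto (fun x => x * (c + lam * (log x - 1))) atTop atTop :=
    tendsto_id.atTop_mul_atTop₀ <| tendsto_atTop_add_const_left _ _ <|
      (tendsto_atTop_add_const_right _ _ tendsto_log_atTop).const_mul_atTop hlam
  exact h.congr fun x => by ring

lemma exists_pos_le_one_add_mul_log_neg (K : ℝ) {lam : ℝ} (hlam : 0 < lam) :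
    ∃ t, 0 < t ∧ t ≤ 1 ∧ K + lam * log t < 0 := by
  have h := (tendsto_log_nhdsGT_zero.const_mul_atBot hlam).eventually (eventually_lt_atBot (-K))
  obtain ⟨t, ⟨ht0, ht1⟩, ht⟩ := ((eventually_mem_set.2 (Ioc_mem_nhdsGT one_pos)).and h).exists
  exact ⟨t, ht0, ht1, by linarith⟩

lemma sum_comp_add_single {ι M N : Type*} [Fintype ι] [DecidableEq ι] [AddCommMonoid M]
    [AddCommGroup N] (g : ι → M → N) (p : ι → M) (i : ι) (x : M) :
    ∑ a, g a ((p + Pi.single i x : ι → M) a) = ∑ a, g a (p a) + (g i (p i + x) - g i (p i)) := by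
  rw [← sub_eq_iff_eq_add', ← Finset.sum_sub_distrib, Fintype.sum_eq_single i]
  · simp
  · intro a ha
    simp [ha]

lemma Matrix.sum_sum_comp_add_single {ι κ M N : Type*} [Fintype ι] [Fintype κ] [DecidableEq ι]
    [DecidableEq κ] [AddCommMonoid M] [AddCommGroup N]
    (g : ι → κ → M → N) (β : Matrix ι κ M) (i : ι) (j : κ) (x : M) :
    ∑ a, ∑ b, g a b ((β + Matrix.single i j x) a b)
      = ∑ a, ∑ b, g a b (β a b) + (g i j (β i j + x) - g i j (β i j)) := by
  rw [← sub_eq_iff_eq_add', ← Fintype.sum_prod_type', ← Fintype.sum_prod_type',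
    ← Finset.sum_sub_distrib, Fintype.sum_eq_single (i, j)]
  · simp
  · rintro ⟨a, b⟩ hab
    have hne : ¬(i = a ∧ j = b) := by rintro ⟨rfl, rfl⟩; exact hab rfl
    simp [hne]

lemma Matrix.sum_add_single_row {ι κ M : Type*} [Fintype κ] [DecidableEq ι] [DecidableEq κ]
    [AddCommMonoid M] (β : Matrix ι κ M) (i : ι) (j : κ) (x : M) :
    (fun a => ∑ b, (β + Matrix.single i j x) a b) = (fun a => ∑ b, β a b) + Pi.single i x := by
  funext a
  rcases eq_or_ne a i with rfl | ha
  · simp [Finset.sum_add_distrib, Matrix.single_apply]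
  · simp [ha.symm]

lemma Matrix.sum_add_single_col {ι κ M : Type*} [Fintype ι] [DecidableEq ι] [DecidableEq κ]
    [AddCommMonoid M] (β : Matrix ι κ M) (i : ι) (j : κ) (x : M) :
    (fun b => ∑ a, (β + Matrix.single i j x) a b) = (fun b => ∑ a, β a b) + Pi.single j x := by
  funext b
  rcases eq_or_ne b j with rfl | hb
  · simp [Finset.sum_add_distrib, Matrix.single_apply]
  · simp [hb.symm]

section genKL

variable {k : ℕ} {p q : Fin k → ℝ}

lemma genKL_eq_sum_mul_klFun (hq : ∀ i, q i ≠ 0) : genKL p q = ∑ i, q i * klFun (p i / q i) := by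
  simp only [genKL, mul_klFun_div (hq _)]

lemma genKL_nonneg (hp : ∀ i, 0 ≤ p i) (hq : ∀ i, 0 < q i) : 0 ≤ genKL p q := by
  rw [genKL_eq_sum_mul_klFun fun i => (hq i).ne']
  exact Finset.sum_nonneg fun i _ =>
    mul_nonneg (hq i).le (klFun_nonneg (div_nonneg (hp i) (hq i).le))

lemma continuous_genKL (hq : ∀ i, q i ≠ 0) : Continuous fun p : Fin k → ℝ => genKL p q := by
  simp only [genKL_eq_sum_mul_klFun hq]
  fun_prop

lemma genKL_add_single_sub_le [DecidableEq (Fin k)] {i : Fin k} {t : ℝ} (hp : 0 ≤ p i)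
    (hq : 0 < q i) (ht : 0 < t) :
    genKL (p + Pi.single i t) q - genKL p q ≤ t * log ((p i + t) / q i) := by
  have hdiff : genKL (p + Pi.single i t) q - genKL p q
      = q i * (klFun ((p i + t) / q i) - klFun (p i / q i)) := by
    rw [genKL, genKL, sum_comp_add_single (fun a x => x * log (x / q a) - x + q a),
      mul_sub, mul_klFun_div hq.ne', mul_klFun_div hq.ne']
    ring
  have hkl := klFun_sub_klFun_le (div_nonneg hp hq.le)
    (div_pos (add_pos_of_nonneg_of_pos hp ht) hq)
  calc genKL (p + Pi.single i t) q - genKL p q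
      ≤ q i * (((p i + t) / q i - p i / q i) * log ((p i + t) / q i)) := by
        rw [hdiff]; exact mul_le_mul_of_nonneg_left hkl hq.le
    _ = t * log ((p i + t) / q i) := by field_simp; ring

end genKL

lemma exists_isMinOn_nonneg_of_le_entry {ι κ : Type*} [Finite ι] [Finite κ]
    {F : Matrix ι κ ℝ → ℝ} (hF : Continuous F)
    (hcoer : ∃ R, ∀ β : Matrix ι κ ℝ, (∀ a b, 0 ≤ β a b) → ∀ i j, R ≤ β i j → F 0 ≤ F β) :
    ∃ β ∈ {β : Matrix ι κ ℝ | ∀ a b, 0 ≤ β a b},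
      IsMinOn F {β : Matrix ι κ ℝ | ∀ a b, 0 ≤ β a b} β := by
  obtain ⟨R, hR⟩ := hcoer
  have hclosed : IsClosed {β : Matrix ι κ ℝ | ∀ a b, 0 ≤ β a b} := by
    simp only [Set.ofPred_forall]
    exact isClosed_iInter fun a => isClosed_iInter fun b =>
      isClosed_le continuous_const ((continuous_apply b).comp (continuous_apply a))
  have hzero : (0 : Matrix ι κ ℝ) ∈ {β : Matrix ι κ ℝ | ∀ a b, 0 ≤ β a b} := fun _ _ => le_rfl
  refine hF.continuousOn.exists_isMinOn' hclosed hzero ?_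
  rw [eventually_iff, mem_inf_principal, mem_cocompact]
  refine ⟨Set.univ.pi fun _ => Set.univ.pi fun _ => Set.Icc 0 R,
    isCompact_univ_pi fun _ => isCompact_univ_pi fun _ => isCompact_Icc, fun β hβ hβS => ?_⟩
  by_contra hlt
  exact hβ fun a _ b _ => ⟨hβS a b, le_of_not_ge fun h => hlt (hR β hβS a b h)⟩

section uotObj

variable {n m : ℕ} (C : Matrix (Fin n) (Fin m) ℝ) {lam lamKL : ℝ} {nv : Fin n → ℝ} {mv : Fin m → ℝ}

lemma continuous_uotObj (lam lamKL : ℝ) (hn : ∀ i, nv i ≠ 0) (hm : ∀ j, mv j ≠ 0) :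
    Continuous (uotObj C lam lamKL nv mv) := by
  have hent : ∀ x : ℝ, x * (log x - 1) = klFun x - 1 := fun x => by rw [klFun_apply]; ring
  unfold uotObj
  simp only [hent, genKL_eq_sum_mul_klFun hn, genKL_eq_sum_mul_klFun hm]
  fun_prop

lemma entropic_cost_sub_le_uotObj (hlam : 0 < lam) (hlamKL : 0 ≤ lamKL) (hn : ∀ i, 0 < nv i)
    (hm : ∀ j, 0 < mv j) {β : Matrix (Fin n) (Fin m) ℝ} (hβ : ∀ a b, 0 ≤ β a b) (i : Fin n)
    (j : Fin m) :
    β i j * C i j + lam * (β i j * (log (β i j) - 1)) - lam * ∑ a, ∑ b, exp (-C a b / lam)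
      ≤ uotObj C lam lamKL nv mv β := by
  set cost : Fin n → Fin m → ℝ := fun a b => β a b * C a b + lam * (β a b * (log (β a b) - 1))
  set bound : Fin n → Fin m → ℝ := fun a b => lam * exp (-C a b / lam)
  have hsingle : cost i j + bound i j ≤ ∑ a, ∑ b, (cost a b + bound a b) := by
    rw [← Fintype.sum_prod_type' (fun a b => cost a b + bound a b)]
    exact Finset.single_le_sum (f := fun x : Fin n × Fin m => cost x.1 x.2 + bound x.1 x.2)
      (fun x _ => neg_le_iff_add_nonneg.1 (neg_mul_exp_le_entropic_cost _ hlam (hβ x.1 x.2)))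
      (Finset.mem_univ (i, j))
  have hsplit : ∑ a, ∑ b, (cost a b + bound a b) = (∑ a, ∑ b, β a b * C a b)
      + lam * ∑ a, ∑ b, β a b * (log (β a b) - 1) + lam * ∑ a, ∑ b, exp (-C a b / lam) := by
    simp only [cost, bound, Finset.sum_add_distrib, Finset.mul_sum]
  have hKL : 0 ≤ lamKL * (genKL (fun i => ∑ j, β i j) nv + genKL (fun j => ∑ i, β i j) mv) :=
    mul_nonneg hlamKL (add_nonneg
      (genKL_nonneg (fun a => Finset.sum_nonneg fun b _ => hβ a b) hn)
      (genKL_nonneg (fun b => Finset.sum_nonneg fun a _ => hβ a b) hm))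
  have hbound : 0 ≤ bound i j := mul_nonneg hlam.le (exp_pos _).le
  unfold uotObj
  linarith

lemma exists_le_uotObj_of_le_entry (hlam : 0 < lam) (hlamKL : 0 ≤ lamKL) (hn : ∀ i, 0 < nv i)
    (hm : ∀ j, 0 < mv j) (M : ℝ) :
    ∃ R, ∀ β : Matrix (Fin n) (Fin m) ℝ, (∀ a b, 0 ≤ β a b) →
      ∀ i j, R ≤ β i j → M ≤ uotObj C lam lamKL nv mv β := by
  set B := lam * ∑ a, ∑ b, exp (-C a b / lam)
  have hev : ∀ᶠ x in atTop, ∀ i j, M + B ≤ x * C i j + lam * (x * (log x - 1)) :=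
    eventually_all.2 fun i => eventually_all.2 fun j =>
      (tendsto_entropic_cost_atTop (C i j) hlam).eventually_ge_atTop (M + B)
  obtain ⟨R, hR⟩ := eventually_atTop.1 hev
  refine ⟨R, fun β hβ i j hij => ?_⟩
  linarith [hR _ hij i j, entropic_cost_sub_le_uotObj C hlam hlamKL hn hm hβ i j]

lemma uotObj_add_single (lam lamKL : ℝ) (β : Matrix (Fin n) (Fin m) ℝ) (i : Fin n)
    (j : Fin m) (t : ℝ) :
    uotObj C lam lamKL nv mv (β + Matrix.single i j t)
      = uotObj C lam lamKL nv mv β + (t * C i j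
        + lam * ((β i j + t) * (log (β i j + t) - 1) - β i j * (log (β i j) - 1))
        + lamKL * ((genKL ((fun a => ∑ b, β a b) + Pi.single i t) nv
              - genKL (fun a => ∑ b, β a b) nv)
          + (genKL ((fun b => ∑ a, β a b) + Pi.single j t) mv
              - genKL (fun b => ∑ a, β a b) mv))) := by
  unfold uotObj
  rw [Matrix.sum_add_single_row, Matrix.sum_add_single_col,
    Matrix.sum_sum_comp_add_single (fun a b x => x * C a b),
    Matrix.sum_sum_comp_add_single (fun _ _ x => x * (log x - 1))]
  ring

lemma exists_uotObj_add_single_lt (hlam : 0 < lam) (hlamKL : 0 ≤ lamKL) (hn : ∀ i, 0 < nv i)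
    (hm : ∀ j, 0 < mv j) {β : Matrix (Fin n) (Fin m) ℝ} (hβ : ∀ a b, 0 ≤ β a b) {i : Fin n}
    {j : Fin m} (hij : β i j = 0) :
    ∃ t > 0, uotObj C lam lamKL nv mv (β + Matrix.single i j t) < uotObj C lam lamKL nv mv β := by
  set r := ∑ b, β i b
  set c := ∑ a, β a j
  have hr : 0 ≤ r := Finset.sum_nonneg fun b _ => hβ i b
  have hc : 0 ≤ c := Finset.sum_nonneg fun a _ => hβ a j
  obtain ⟨t, ht0, ht1, ht⟩ := exists_pos_le_one_add_mul_log_neg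
    (C i j - lam + lamKL * (log ((r + 1) / nv i) + log ((c + 1) / mv j))) hlam
  have hlog_mono : ∀ {s q : ℝ}, 0 ≤ s → 0 < q → log ((s + t) / q) ≤ log ((s + 1) / q) :=
    fun hs hq => log_le_log (div_pos (by linarith) hq) (by gcongr)
  have hrow := (genKL_add_single_sub_le (p := fun a => ∑ b, β a b) hr (hn i) ht0).trans
    (mul_le_mul_of_nonneg_left (hlog_mono hr (hn i)) ht0.le)
  have hcol := (genKL_add_single_sub_le (p := fun b => ∑ a, β a b) hc (hm j) ht0).trans
    (mul_le_mul_of_nonneg_left (hlog_mono hc (hm j)) ht0.le)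
  refine ⟨t, ht0, ?_⟩
  rw [uotObj_add_single, hij, zero_add, zero_mul, sub_zero]
  nlinarith [mul_le_mul_of_nonneg_left (add_le_add hrow hcol) hlamKL, mul_neg_of_pos_of_neg ht0 ht]

lemma pos_of_isMinOn_uotObj (hlam : 0 < lam) (hlamKL : 0 ≤ lamKL) (hn : ∀ i, 0 < nv i)
    (hm : ∀ j, 0 < mv j) {β : Matrix (Fin n) (Fin m) ℝ}
    (hβ : β ∈ {β : Matrix (Fin n) (Fin m) ℝ | ∀ a b, 0 ≤ β a b})
    (hmin : IsMinOn (uotObj C lam lamKL nv mv)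
      {β : Matrix (Fin n) (Fin m) ℝ | ∀ a b, 0 ≤ β a b} β)
    (i : Fin n) (j : Fin m) : 0 < β i j := by
  refine (hβ i j).lt_of_ne fun hij => ?_
  obtain ⟨t, ht, hlt⟩ := exists_uotObj_add_single_lt C hlam hlamKL hn hm hβ hij.symm
  have hβt : ∀ a b, 0 ≤ (β + Matrix.single i j t) a b := fun a b =>
    add_nonneg (hβ a b) (by rw [Matrix.single_apply]; split_ifs <;> linarith)
  exact (hmin hβt).not_gt hlt

end uotObj

/-- The entropic-regularized UOT objective attains its infimum over entrywise
positive matrices: a minimizer exists. -/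
theorem stmt8 {n m : ℕ} (C : Matrix (Fin n) (Fin m) ℝ) (lam lamKL : ℝ)
    (hlam : 0 < lam) (hlamKL : 0 ≤ lamKL)
    (nv : Fin n → ℝ) (mv : Fin m → ℝ) (hn : ∀ i, 0 < nv i) (hm : ∀ j, 0 < mv j) :
    ∃ β ∈ {β : Matrix (Fin n) (Fin m) ℝ | ∀ i j, 0 < β i j},
      ∀ β' ∈ {β : Matrix (Fin n) (Fin m) ℝ | ∀ i j, 0 < β i j},
        uotObj C lam lamKL nv mv β ≤ uotObj C lam lamKL nv mv β' := by
  obtain ⟨β, hβ, hmin⟩ := exists_isMinOn_nonneg_of_le_entry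
    (continuous_uotObj C lam lamKL (fun i => (hn i).ne') fun j => (hm j).ne')
    (exists_le_uotObj_of_le_entry C hlam hlamKL hn hm _)
  exact ⟨β, pos_of_isMinOn_uotObj C hlam hlamKL hn hm hβ hmin,
    fun β' hβ' => hmin fun a b => (hβ' a b).le⟩
end

section
/- As λ_KL → ∞ with λ > 0 fixed, the minimizers β*(λ_KL) of the entropic-regularized UOT objective F(β; λ_KL) converge to the minimizer of ⟨β,C⟩ + λΣ β_{ij}(log β_{ij}−1) subject to the exact marginal constraints β𝟙_m = n, βᵀ𝟙_n = m, provided Σn_i = Σm_j. -/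
open Real Filter Finset

open Real Filter

lemma mul_log_div' (p q : ℝ) (hq : q ≠ 0) :
    p * Real.log (p / q) = p * Real.log p - p * Real.log q := by
  rcases eq_or_ne p 0 with h | h
  · simp [h]
  · rw [Real.log_div h hq]; ring

lemma klterm_nonneg {p q : ℝ} (hp : 0 ≤ p) (hq : 0 < q) :
    0 ≤ p * Real.log (p / q) - p + q := by
  rcases eq_or_ne p 0 with h | h
  · simp [h]; positivity
  · have hp' : 0 < p := lt_of_le_of_ne hp (Ne.symm h)
    have h1 : Real.log (q / p) ≤ q / p - 1 := Real.log_le_sub_one_of_pos (div_pos hq hp')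
    rw [Real.log_div hq.ne' hp'.ne'] at h1
    rw [mul_log_div' p q hq.ne']
    have h2 : p * (Real.log q - Real.log p) ≤ p * (q / p - 1) :=
      mul_le_mul_of_nonneg_left h1 hp'.le
    have h3 : p * (q / p) = q := by field_simp
    nlinarith

lemma klterm_pos {p q : ℝ} (hp : 0 ≤ p) (hq : 0 < q) (hne : p ≠ q) :
    0 < p * Real.log (p / q) - p + q := by
  rcases eq_or_ne p 0 with h | h
  · simp [h]; positivity
  · have hp' : 0 < p := lt_of_le_of_ne hp (Ne.symm h)
    have hne' : q / p ≠ 1 := by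
      intro hc
      exact hne ((div_eq_one_iff_eq hp'.ne').mp hc).symm
    have h1 : Real.log (q / p) < q / p - 1 := Real.log_lt_sub_one_of_pos (div_pos hq hp') hne'
    rw [Real.log_div hq.ne' hp'.ne'] at h1
    rw [mul_log_div' p q hq.ne']
    have h2 : p * (Real.log q - Real.log p) < p * (q / p - 1) :=
      mul_lt_mul_of_pos_left h1 hp'
    have h3 : p * (q / p) = q := by field_simp
    nlinarith

lemma entterm {lam c x : ℝ} (hlam : 0 < lam) (hx : 0 < x) :
    -lam * Real.exp (-(c / lam)) ≤ x * c + lam * (x * (Real.log x - 1)) := by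
  set q := Real.exp (-(c / lam)) with hqdef
  have hq : 0 < q := Real.exp_pos _
  have h := klterm_nonneg hx.le hq
  rw [mul_log_div' x q hq.ne'] at h
  have hlq : Real.log q = -(c / lam) := Real.log_exp _
  rw [hlq] at h
  have h2 : 0 ≤ lam * (x * Real.log x - x * -(c / lam) - x + q) :=
    mul_nonneg hlam.le h
  have h3 : lam * (x * (c / lam)) = x * c := by field_simp
  nlinarith

lemma phi_mid_lt {lam c a b : ℝ} (hlam : 0 < lam) (ha : 0 ≤ a) (hb : 0 ≤ b) (hab : a ≠ b) :
    ((a + b) / 2) * c + lam * (((a + b) / 2) * (Real.log ((a + b) / 2) - 1))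
      < ((a * c + lam * (a * (Real.log a - 1))) + (b * c + lam * (b * (Real.log b - 1)))) / 2 := by
  have h := Real.strictConvexOn_mul_log.2 (Set.mem_Ici.mpr ha) (Set.mem_Ici.mpr hb) hab
    one_half_pos one_half_pos (by norm_num)
  simp only [smul_eq_mul] at h
  have e : (1 / 2 : ℝ) * a + (1 / 2 : ℝ) * b = (a + b) / 2 := by ring
  rw [e] at h
  nlinarith [mul_lt_mul_of_pos_left h hlam]

lemma phi_mid_le {lam c a b : ℝ} (hlam : 0 < lam) (ha : 0 ≤ a) (hb : 0 ≤ b) :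
    ((a + b) / 2) * c + lam * (((a + b) / 2) * (Real.log ((a + b) / 2) - 1))
      ≤ ((a * c + lam * (a * (Real.log a - 1))) + (b * c + lam * (b * (Real.log b - 1)))) / 2 := by
  rcases eq_or_ne a b with h | h
  · subst h
    have e : (a + a) / 2 = a := by ring
    rw [e]; exact le_of_eq (by ring)
  · exact (phi_mid_lt hlam ha hb h).le

lemma row_bound {r q B : ℝ} (hr : 0 < r) (hq : 0 < q)
    (h : r * Real.log (r / q) - r + q ≤ B) : r ≤ max (q * Real.exp 2) B := by
  rcases le_or_gt r (q * Real.exp 2) with hc | hc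
  · exact le_max_of_le_left hc
  · refine le_max_of_le_right ?_
    have h1 : Real.exp 2 < r / q := by
      rw [lt_div_iff₀ hq]; linarith [mul_comm q (Real.exp 2)]
    have h2 : (2 : ℝ) ≤ Real.log (r / q) := by
      have := Real.log_le_log (Real.exp_pos 2) h1.le
      rwa [Real.log_exp] at this
    nlinarith



/-- As `λ_KL → ∞`, minimizers of the unbalanced entropic OT objective converge to
the minimizer of the entropic OT objective under exact marginal constraints. -/
theorem stmt13 {n m : ℕ} (C : Matrix (Fin n) (Fin m) ℝ) (lam : ℝ) (hlam : 0 < lam)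
    (nv : Fin n → ℝ) (mv : Fin m → ℝ) (hn : ∀ i, 0 < nv i) (hm : ∀ j, 0 < mv j)
    (hmass : ∑ i, nv i = ∑ j, mv j)
    (βstar : ℝ → Matrix (Fin n) (Fin m) ℝ)
    (hβstar : ∀ t : ℝ, 0 ≤ t → βstar t ∈ {β : Matrix (Fin n) (Fin m) ℝ | ∀ i j, 0 < β i j}
      ∧ IsMinOn (uotObj C lam t nv mv) {β | ∀ i j, 0 < β i j} (βstar t))
    (β₀ : Matrix (Fin n) (Fin m) ℝ)
    (hβ₀mem : β₀ ∈ {β : Matrix (Fin n) (Fin m) ℝ | (∀ i j, 0 < β i j) ∧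
        (∀ i, ∑ j, β i j = nv i) ∧ (∀ j, ∑ i, β i j = mv j)})
    (hβ₀ : IsMinOn (uotObj C lam 0 nv mv)
      {β : Matrix (Fin n) (Fin m) ℝ | (∀ i j, 0 < β i j) ∧
        (∀ i, ∑ j, β i j = nv i) ∧ (∀ j, ∑ i, β i j = mv j)} β₀) :
    Filter.Tendsto βstar Filter.atTop (nhds β₀) := by
  obtain ⟨hβ₀pos, hβ₀row, hβ₀col⟩ := hβ₀mem
  set F0 : Matrix (Fin n) (Fin m) ℝ → ℝ := uotObj C lam 0 nv mv with hF0def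
  set G : Matrix (Fin n) (Fin m) ℝ → ℝ :=
    fun β => genKL (fun i => ∑ j, β i j) nv + genKL (fun j => ∑ i, β i j) mv with hGdef
  have hsplit : ∀ t β, uotObj C lam t nv mv β = F0 β + t * G β := by
    intro t β; simp only [hF0def, hGdef, uotObj]; ring
  have hG0 : G β₀ = 0 := by
    have h1 : genKL (fun i => ∑ j, β₀ i j) nv = 0 := by
      unfold genKL
      apply Finset.sum_eq_zero
      intro i _
      simp only [hβ₀row i, div_self (hn i).ne', Real.log_one]; ring
    have h2 : genKL (fun j => ∑ i, β₀ i j) mv = 0 := by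
      unfold genKL
      apply Finset.sum_eq_zero
      intro j _
      simp only [hβ₀col j, div_self (hm j).ne', Real.log_one]; ring
    simp [hGdef, h1, h2]
  set M : ℝ := F0 β₀ with hMdef
  set L : ℝ := ∑ i, ∑ j, (-lam * Real.exp (-(C i j / lam))) with hLdef
  have hF0form : ∀ β : Matrix (Fin n) (Fin m) ℝ,
      F0 β = ∑ i, ∑ j, (β i j * C i j + lam * (β i j * (Real.log (β i j) - 1))) := by
    intro β
    simp only [hF0def, uotObj, zero_mul, add_zero, Finset.mul_sum, ← Finset.sum_add_distrib]
  have hL : ∀ β : Matrix (Fin n) (Fin m) ℝ, (∀ i j, 0 < β i j) → L ≤ F0 β := by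
    intro β hβ
    rw [hF0form, hLdef]
    refine Finset.sum_le_sum fun i _ => Finset.sum_le_sum fun j _ => ?_
    exact entterm hlam (hβ i j)
  have key : ∀ t : ℝ, 0 ≤ t → F0 (βstar t) + t * G (βstar t) ≤ M := by
    intro t ht
    obtain ⟨hpos, hmin⟩ := hβstar t ht
    have h := isMinOn_iff.mp hmin β₀ hβ₀pos
    rw [hsplit, hsplit, hG0] at h
    rw [hMdef]; linarith
  have hGnn : ∀ β : Matrix (Fin n) (Fin m) ℝ, (∀ i j, 0 ≤ β i j) → 0 ≤ G β := by
    intro β hβ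
    have h1 : (0:ℝ) ≤ genKL (fun i => ∑ j, β i j) nv := by
      unfold genKL
      exact Finset.sum_nonneg fun i _ =>
        klterm_nonneg (Finset.sum_nonneg fun j _ => hβ i j) (hn i)
    have h2 : (0:ℝ) ≤ genKL (fun j => ∑ i, β i j) mv := by
      unfold genKL
      exact Finset.sum_nonneg fun j _ =>
        klterm_nonneg (Finset.sum_nonneg fun i _ => hβ i j) (hm j)
    simp only [hGdef]; linarith
  set B : ℝ := M - L with hBdef
  have hBnn : 0 ≤ B := by
    have := hL β₀ hβ₀pos; rw [hBdef, hMdef]; linarith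
  set R : Fin n → ℝ := fun i => max (nv i * Real.exp 2) B with hRdef
  set K : Set (Matrix (Fin n) (Fin m) ℝ) := {β | ∀ i j, β i j ∈ Set.Icc 0 (R i)} with hKdef
  have hKcomp : IsCompact K := by
    have : K = Set.univ.pi (fun i => Set.univ.pi fun _ : Fin m => Set.Icc (0:ℝ) (R i)) := by
      ext β
      simp only [hKdef, Set.mem_setOf_eq]
      constructor
      · intro hβ
        intro i _
        intro j _
        exact hβ i j
      · intro hβ i j
        exact hβ i (Set.mem_univ i) j (Set.mem_univ j)
    rw [this]
    exact isCompact_univ_pi fun i => isCompact_univ_pi fun _ => isCompact_Icc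
  have heventK : ∀ᶠ t in atTop, βstar t ∈ K := by
    filter_upwards [eventually_ge_atTop (1:ℝ)] with t ht
    have ht0 : (0:ℝ) ≤ t := le_trans zero_le_one ht
    obtain ⟨hpos, hmin⟩ := hβstar t ht0
    have hkey := key t ht0
    have hg := hGnn _ (fun i j => (hpos i j).le)
    have htG : t * G (βstar t) ≤ B := by
      have := hL _ hpos; rw [hBdef]; linarith
    have hGB : G (βstar t) ≤ B := by nlinarith
    intro i j
    have hrow : 0 < ∑ j', βstar t i j' :=
      Finset.sum_pos (fun j' _ => hpos i j') ⟨j, Finset.mem_univ j⟩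
    have h1 : (∑ j', βstar t i j') * Real.log ((∑ j', βstar t i j') / nv i)
        - (∑ j', βstar t i j') + nv i ≤ G (βstar t) := by
      have hA : (∑ j', βstar t i j') * Real.log ((∑ j', βstar t i j') / nv i)
          - (∑ j', βstar t i j') + nv i ≤ genKL (fun i' => ∑ j', βstar t i' j') nv := by
        unfold genKL
        exact Finset.single_le_sum
          (f := fun i' => (∑ j', βstar t i' j') * Real.log ((∑ j', βstar t i' j') / nv i')
            - (∑ j', βstar t i' j') + nv i')
          (fun i' _ => klterm_nonneg (Finset.sum_nonneg fun j' _ => (hpos i' j').le) (hn i'))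
          (Finset.mem_univ i)
      have hB2 : (0:ℝ) ≤ genKL (fun j' => ∑ i', βstar t i' j') mv := by
        unfold genKL
        exact Finset.sum_nonneg fun j' _ =>
          klterm_nonneg (Finset.sum_nonneg fun i' _ => (hpos i' j').le) (hm j')
      simp only [hGdef]; linarith
    have h2 := le_trans h1 hGB
    have hr : (∑ j', βstar t i j') ≤ R i := row_bound hrow (hn i) h2
    refine ⟨(hpos i j).le, ?_⟩
    calc βstar t i j ≤ ∑ j', βstar t i j' :=
          Finset.single_le_sum (fun j' _ => (hpos i j').le) (Finset.mem_univ j)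
      _ ≤ R i := hr
  -- continuity
  have helem : ∀ (i : Fin n) (j : Fin m),
      Continuous fun β : Matrix (Fin n) (Fin m) ℝ => β i j :=
    fun i j => continuous_id.matrix_elem i j
  have hGcont : Continuous G := by
    have hform : G = fun β : Matrix (Fin n) (Fin m) ℝ =>
        (∑ i, ((∑ j, β i j) * Real.log (∑ j, β i j) - (∑ j, β i j) * Real.log (nv i)
          - (∑ j, β i j) + nv i))
        + ∑ j, ((∑ i, β i j) * Real.log (∑ i, β i j) - (∑ i, β i j) * Real.log (mv j)
          - (∑ i, β i j) + mv j) := by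
      funext β
      simp only [hGdef, genKL]
      congr 1
      · exact Finset.sum_congr rfl fun i _ => by rw [mul_log_div' _ _ (hn i).ne']
      · exact Finset.sum_congr rfl fun j _ => by rw [mul_log_div' _ _ (hm j).ne']
    rw [hform]
    refine Continuous.add ?_ ?_
    · refine continuous_finset_sum _ fun i _ => ?_
      have hs : Continuous fun β : Matrix (Fin n) (Fin m) ℝ => ∑ j, β i j :=
        continuous_finset_sum _ fun j _ => helem i j
      exact (((Real.continuous_mul_log.comp hs).sub (hs.mul continuous_const)).sub hs).add
        continuous_const
    · refine continuous_finset_sum _ fun j _ => ?_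
      have hs : Continuous fun β : Matrix (Fin n) (Fin m) ℝ => ∑ i, β i j :=
        continuous_finset_sum _ fun i _ => helem i j
      exact (((Real.continuous_mul_log.comp hs).sub (hs.mul continuous_const)).sub hs).add
        continuous_const
  have hF0cont : Continuous F0 := by
    have hform : F0 = fun β : Matrix (Fin n) (Fin m) ℝ =>
        ∑ i, ∑ j, (β i j * C i j + lam * (β i j * Real.log (β i j) - β i j)) := by
      funext β
      rw [hF0form]
      exact Finset.sum_congr rfl fun i _ => Finset.sum_congr rfl fun j _ => by ring
    rw [hform]
    refine continuous_finset_sum _ fun i _ => continuous_finset_sum _ fun j _ => ?_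
    exact ((helem i j).mul continuous_const).add
      (continuous_const.mul ((Real.continuous_mul_log.comp (helem i j)).sub (helem i j)))
  have hGto0 : Tendsto (fun t => G (βstar t)) atTop (nhds 0) := by
    refine tendsto_of_tendsto_of_tendsto_of_le_of_le' (tendsto_const_nhds)
      (Tendsto.div_atTop (tendsto_const_nhds (x := B)) tendsto_id) ?_ ?_
    · filter_upwards [eventually_ge_atTop (0:ℝ)] with t ht
      exact hGnn _ (fun i j => ((hβstar t ht).1 i j).le)
    · filter_upwards [eventually_ge_atTop (1:ℝ)] with t ht
      have ht0 : (0:ℝ) ≤ t := le_trans zero_le_one ht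
      obtain ⟨hpos, hmin⟩ := hβstar t ht0
      have hkey := key t ht0
      have htpos : (0:ℝ) < t := lt_of_lt_of_le one_pos ht
      show G (βstar t) ≤ B / t
      rw [le_div_iff₀ htpos]
      have := hL _ hpos
      rw [hBdef]; nlinarith
  have hF0ub : ∀ᶠ t in atTop, F0 (βstar t) ≤ M := by
    filter_upwards [eventually_ge_atTop (0:ℝ)] with t ht
    have hkey := key t ht
    have hg := hGnn _ (fun i j => ((hβstar t ht).1 i j).le)
    nlinarith
  -- every cluster point equals β₀
  have claim : ∀ x, MapClusterPt x atTop βstar → x = β₀ := by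
    intro x hx
    have hclosed : ∀ (f : Matrix (Fin n) (Fin m) ℝ → ℝ) (S : Set ℝ), Continuous f →
        IsClosed S → (∀ᶠ t in atTop, f (βstar t) ∈ S) → f x ∈ S := by
      intro f S hf hS hev
      have h1 : MapClusterPt (f x) atTop (f ∘ βstar) := hx.continuousAt_comp hf.continuousAt
      have h2 : Filter.map (f ∘ βstar) atTop ≤ Filter.principal S :=
        le_principal_iff.mpr (Filter.mem_map.mpr hev)
      have h3 : ClusterPt (f x) (Filter.principal S) := h1.clusterPt.mono h2
      rw [← hS.closure_eq]
      exact mem_closure_iff_clusterPt.mpr h3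
    have hxnn : ∀ i j, 0 ≤ x i j := by
      intro i j
      have := hclosed (fun β => β i j) (Set.Ici 0) (helem i j) isClosed_Ici ?_
      · exact this
      · filter_upwards [eventually_ge_atTop (0:ℝ)] with t ht
        exact ((hβstar t ht).1 i j).le
    have hGx : G x = 0 := by
      have h1 : MapClusterPt (G x) atTop (G ∘ βstar) := hx.continuousAt_comp hGcont.continuousAt
      have h2 : ClusterPt (G x) (nhds 0) := h1.clusterPt.mono hGto0
      exact eq_of_nhds_neBot h2
    have hF0x : F0 x ≤ M := hclosed F0 (Set.Iic M) hF0cont isClosed_Iic hF0ub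
    -- marginals of x are exact
    have hrnn : ∀ i, (0:ℝ) ≤ ∑ j, x i j := fun i => Finset.sum_nonneg fun j _ => hxnn i j
    have hcnn : ∀ j, (0:ℝ) ≤ ∑ i, x i j := fun j => Finset.sum_nonneg fun i _ => hxnn i j
    have hgsplit : genKL (fun i => ∑ j, x i j) nv = 0 ∧
        genKL (fun j => ∑ i, x i j) mv = 0 := by
      have ha : (0:ℝ) ≤ genKL (fun i => ∑ j, x i j) nv := by
        unfold genKL
        exact Finset.sum_nonneg fun i _ => klterm_nonneg (hrnn i) (hn i)
      have hb : (0:ℝ) ≤ genKL (fun j => ∑ i, x i j) mv := by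
        unfold genKL
        exact Finset.sum_nonneg fun j _ => klterm_nonneg (hcnn j) (hm j)
      have hsum : genKL (fun i => ∑ j, x i j) nv + genKL (fun j => ∑ i, x i j) mv = 0 := by
        rw [hGdef] at hGx; exact hGx
      constructor <;> linarith
    have hxrow : ∀ i, ∑ j, x i j = nv i := by
      intro i
      by_contra hne
      have hpos := klterm_pos (hrnn i) (hn i) hne
      have h0 := (Finset.sum_eq_zero_iff_of_nonneg
        (fun i' _ => klterm_nonneg (hrnn i') (hn i'))).mp (by
          have := hgsplit.1; unfold genKL at this; exact this) i (Finset.mem_univ i)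
      rw [h0] at hpos
      exact lt_irrefl _ hpos
    have hxcol : ∀ j, ∑ i, x i j = mv j := by
      intro j
      by_contra hne
      have hpos := klterm_pos (hcnn j) (hm j) hne
      have h0 := (Finset.sum_eq_zero_iff_of_nonneg
        (fun j' _ => klterm_nonneg (hcnn j') (hm j'))).mp (by
          have := hgsplit.2; unfold genKL at this; exact this) j (Finset.mem_univ j)
      rw [h0] at hpos
      exact lt_irrefl _ hpos
    -- uniqueness by strict convexity
    by_contra hne
    have hdiff : ∃ i j, x i j ≠ β₀ i j := by
      by_contra h
      push_neg at h
      exact hne (by ext i j; exact h i j)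
    obtain ⟨i0, j0, hij⟩ := hdiff
    set z : Matrix (Fin n) (Fin m) ℝ := fun i j => (x i j + β₀ i j) / 2 with hzdef
    have hzmem : z ∈ {β : Matrix (Fin n) (Fin m) ℝ | (∀ i j, 0 < β i j) ∧
        (∀ i, ∑ j, β i j = nv i) ∧ (∀ j, ∑ i, β i j = mv j)} := by
      refine ⟨fun i j => ?_, fun i => ?_, fun j => ?_⟩
      · simp only [hzdef]
        have := hβ₀pos i j
        have := hxnn i j
        positivity
      · simp only [hzdef, ← Finset.sum_div, Finset.sum_add_distrib, hxrow i, hβ₀row i]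
        ring
      · simp only [hzdef, ← Finset.sum_div, Finset.sum_add_distrib, hxcol j, hβ₀col j]
        ring
    have h1 : F0 β₀ ≤ F0 z := isMinOn_iff.mp hβ₀ z hzmem
    have h2 : F0 z < (F0 x + F0 β₀) / 2 := by
      rw [hF0form, hF0form, hF0form, ← Finset.sum_add_distrib, Finset.sum_div]
      refine Finset.sum_lt_sum (fun i _ => ?_) ⟨i0, Finset.mem_univ i0, ?_⟩
      · rw [← Finset.sum_add_distrib, Finset.sum_div]
        refine Finset.sum_le_sum fun j _ => ?_
        simp only [hzdef]
        exact phi_mid_le hlam (hxnn i j) (hβ₀pos i j).le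
      · rw [← Finset.sum_add_distrib, Finset.sum_div]
        refine Finset.sum_lt_sum (fun j _ => ?_) ⟨j0, Finset.mem_univ j0, ?_⟩
        · simp only [hzdef]
          exact phi_mid_le hlam (hxnn i0 j) (hβ₀pos i0 j).le
        · simp only [hzdef]
          exact phi_mid_lt hlam (hxnn i0 j0) (hβ₀pos i0 j0).le hij
    rw [hMdef] at hF0x
    linarith
  -- conclude by compactness
  by_contra hnot
  rw [Filter.tendsto_def] at hnot
  push_neg at hnot
  obtain ⟨s, hs, hpre⟩ := hnot
  set V : Set (Matrix (Fin n) (Fin m) ℝ) := interior s with hVdef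
  have hV : β₀ ∈ V := mem_interior_iff_mem_nhds.mpr hs
  have hfreq : ∃ᶠ t in atTop, βstar t ∈ Vᶜ := by
    have h1 : ¬ ∀ᶠ t in atTop, βstar t ∈ s := hpre
    have h2 : ∃ᶠ t in atTop, βstar t ∉ s := Filter.not_eventually.mp h1
    exact h2.mono fun t ht hmem => ht (interior_subset hmem)
  have hne1 : (Filter.map βstar atTop ⊓ Filter.principal Vᶜ).NeBot :=
    Filter.frequently_mem_iff_neBot.mp (Filter.frequently_map.mpr hfreq)
  have hKV : IsCompact (K ∩ Vᶜ) := hKcomp.inter_right isOpen_interior.isClosed_compl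
  have hle : Filter.map βstar atTop ⊓ Filter.principal Vᶜ ≤ Filter.principal (K ∩ Vᶜ) := by
    rw [le_principal_iff]
    exact Filter.inter_mem (Filter.mem_inf_of_left (Filter.mem_map.mpr heventK))
      (Filter.mem_inf_of_right (Filter.mem_principal_self _))
  obtain ⟨y, hyK, hy⟩ := hKV.exists_clusterPt hle
  have hmcp : MapClusterPt y atTop βstar := hy.mono inf_le_left
  have := claim y hmcp
  rw [this] at hyK
  exact hyK.2 hV
end
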